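/- arXiv:1202.5025 — 10 statements merged into one kernel-verified Lean document; each statement's English description precedes it below -/
import Mathlib

section
/- For every vertex v of a connected graph G on n vertices, the sum of relevances R(v) = Σ_{e∈E} rel(e,v) is at most (n−1) times the diameter of the bridge tree of G. -/
open SimpleGraph

/-- Separation of an edge: number of ordered vertex pairs disconnected by removing it. -/
noncomputable def sep {V : Type*} (G : SimpleGraph V) (e : Sym2 V) : ℕ :=
  Nat.card {p : V × V // ¬ (G.deleteEdges {e}).Reachable p.1 p.2}

/-- Relevance of an edge for a vertex: number of vertices reachable from `v` only through `e`. -/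
noncomputable def rel {V : Type*} (G : SimpleGraph V) (e : Sym2 V) (v : V) : ℕ :=
  Nat.card {w : V // ¬ (G.deleteEdges {e}).Reachable v w}

/-- Sum of relevances for a vertex. -/
noncomputable def RSum {V : Type*} (G : SimpleGraph V) (v : V) : ℕ :=
  ∑ᶠ e ∈ G.edgeSet, rel G e v

/-- Number of bridges separating `u` from `v`; this is the distance in the bridge tree
between the bridgeless connected components of `u` and `v`. -/
noncomputable def bridgeDist {V : Type*} (G : SimpleGraph V) (u v : V) : ℕ :=
  Nat.card {e : Sym2 V // G.IsBridge e ∧ ¬ (G.deleteEdges {e}).Reachable u v}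

/-- Diameter of the bridge tree of `G`. -/
noncomputable def bridgeTreeDiam {V : Type*} [Fintype V] (G : SimpleGraph V) : ℕ :=
  Finset.univ.sup fun p : V × V => bridgeDist G p.1 p.2

/-!
Double counting pairs `(e, w)` such that deleting `e` separates `v` from `w` gives
`R(v) = ∑_w #{edges separating v from w}`. In a connected graph every separating edge is a
bridge, so the `w`-th term is at most the bridge-tree distance from `v` to `w`, which is at most
the diameter and vanishes for `w = v`.
-/

open Finset

section

variable {V : Type*} {G : SimpleGraph V}

lemma SimpleGraph.Connected.isBridge_of_not_reachable_deleteEdges (hG : G.Connected)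
    {e : Sym2 V} {u w : V} (h : ¬ (G.deleteEdges {e}).Reachable u w) : G.IsBridge e := by
  obtain ⟨x, y⟩ := e
  by_contra hb
  exact h ((hG.connected_delete_edge_of_not_isBridge hb).preconnected u w)

lemma bridgeDist_self (v : V) : bridgeDist G v v = 0 :=
  Nat.card_eq_zero.mpr (.inl ⟨fun e => e.2.2 (Reachable.refl v)⟩)

lemma bridgeDist_le_bridgeTreeDiam [Fintype V] (u v : V) :
    bridgeDist G u v ≤ bridgeTreeDiam G :=
  le_sup (f := fun p : V × V => bridgeDist G p.1 p.2) (mem_univ (u, v))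

lemma sum_bridgeDist_le [Fintype V] (v : V) :
    ∑ w, bridgeDist G v w ≤ (Fintype.card V - 1) * bridgeTreeDiam G := by
  classical
  rw [← add_sum_erase univ _ (mem_univ v), bridgeDist_self, zero_add, ← card_univ,
    ← card_erase_of_mem (mem_univ v), ← smul_eq_mul]
  exact sum_le_card_nsmul _ _ _ fun w _ => bridgeDist_le_bridgeTreeDiam v w

variable [Fintype V] [DecidableEq V] [DecidableRel G.Adj]

open Classical in
lemma RSum_eq_sum_card_filter_not_reachable (v : V) :
    RSum G v = ∑ w, #{e ∈ G.edgeFinset | ¬ (G.deleteEdges {e}).Reachable v w} := by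
  rw [RSum, ← coe_edgeFinset, finsum_mem_coe_finset]
  simp only [rel, Nat.card_eq_fintype_card, Fintype.card_subtype]
  exact sum_card_bipartiteAbove_eq_sum_card_bipartiteBelow
    (r := fun e w => ¬ (G.deleteEdges {e}).Reachable v w)

open Classical in
lemma SimpleGraph.Connected.card_filter_not_reachable_le_bridgeDist (hG : G.Connected)
    (v w : V) : #{e ∈ G.edgeFinset | ¬ (G.deleteEdges {e}).Reachable v w} ≤ bridgeDist G v w := by
  rw [bridgeDist, Nat.card_eq_fintype_card, Fintype.card_subtype]
  refine card_le_card fun e he => ?_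
  have hsep := (mem_filter.mp he).2
  exact mem_filter.mpr ⟨mem_univ e, hG.isBridge_of_not_reachable_deleteEdges hsep, hsep⟩

end

/-- The sum of relevances of a vertex is at most `(n−1)` times the diameter of the bridge tree. -/
theorem stmt_3 {V : Type*} [Fintype V] (G : SimpleGraph V) (hG : G.Connected) (v : V) :
    RSum G v ≤ (Fintype.card V - 1) * bridgeTreeDiam G := by
  classical
  calc RSum G v = ∑ w, #{e ∈ G.edgeFinset | ¬ (G.deleteEdges {e}).Reachable v w} :=
        RSum_eq_sum_card_filter_not_reachable v
    _ ≤ ∑ w, bridgeDist G v w :=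
        sum_le_sum fun w _ => hG.card_filter_not_reachable_le_bridgeDist v w
    _ ≤ (Fintype.card V - 1) * bridgeTreeDiam G := sum_bridgeDist_le v
end

section
/- The bridge tree of a connected graph is a tree, and the map sending each bridge {v,w} of G to the edge {φ(v),φ(w)} of the bridge tree (where φ maps a vertex to its bridgeless connected component) is a bijection from the bridges of G to the edges of the bridge tree. -/
/-!
Contracting each bridgeless component to a point keeps exactly the bridges of `G` as edges,
and the contraction of a connected graph is connected. Every edge of the contraction is a
bridge: a walk in the bridge tree that avoids the image of a bridge `b` lifts to a walk in
`G - b` between the ends of `b`, because the components stay connected in `G - b` and every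
other tree edge comes from an edge of `G` other than `b`. Injectivity on bridges is the same
observation: a second bridge with the image of `b` would join the ends of `b` in `G - b`.
-/

open SimpleGraph

/-- Two vertices are equivalent iff they lie in the same bridgeless connected component,
i.e. they are connected after deleting all bridges. -/
def bccSetoid {V : Type*} (G : SimpleGraph V) : Setoid V where
  r u v := (G.deleteEdges {e | e ∈ G.edgeSet ∧ G.IsBridge e}).Reachable u v
  iseqv := ⟨fun _ => SimpleGraph.Reachable.refl _,
    SimpleGraph.Reachable.symm, SimpleGraph.Reachable.trans⟩

/-- The bridge tree of `G`: vertices are the bridgeless connected components, two of which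
are adjacent iff some edge of `G` joins them. -/
def bridgeTree {V : Type*} (G : SimpleGraph V) : SimpleGraph (Quotient (bccSetoid G)) where
  Adj A B := A ≠ B ∧ ∃ u v : V,
    Quotient.mk (bccSetoid G) u = A ∧ Quotient.mk (bccSetoid G) v = B ∧ G.Adj u v
  symm := by
    constructor
    rintro A B ⟨hne, u, v, hu, hv, h⟩
    exact ⟨hne.symm, v, u, hv, hu, h.symm⟩
  loopless := by
    constructor
    rintro A ⟨hne, -⟩
    exact hne rfl

namespace SimpleGraph

variable {V W : Type*} {H : SimpleGraph V} {K : SimpleGraph W}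

lemma Reachable.map_of_adj (f : V → W) (hf : ∀ ⦃a c⦄, H.Adj a c → K.Reachable (f a) (f c))
    {a c : V} (h : H.Reachable a c) : K.Reachable (f a) (f c) := by
  rw [reachable_iff_reflTransGen] at h ⊢
  exact Relation.ReflTransGen.lift' f
    (fun a c hac => (reachable_iff_reflTransGen _ _).mp (hf hac)) _ _ h

lemma Reachable.of_map (f : V → W) (hfib : ∀ ⦃a c⦄, f a = f c → H.Reachable a c)
    (hlift : ∀ ⦃A C⦄, K.Adj A C → ∃ x y, f x = A ∧ f y = C ∧ H.Reachable x y)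
    {a c : V} (h : K.Reachable (f a) (f c)) : H.Reachable a c := by
  rw [reachable_iff_reflTransGen] at h
  suffices ∀ {B}, Relation.ReflTransGen K.Adj (f a) B → ∀ c, f c = B → H.Reachable a c from
    this h c rfl
  intro B hB
  induction hB with
  | refl => exact fun c hc => hfib hc.symm
  | tail _ hBC ih =>
    intro c hc
    obtain ⟨x, y, rfl, rfl, hxy⟩ := hlift hBC
    exact (ih x rfl).trans (hxy.trans (hfib hc.symm))

end SimpleGraph

section BridgeTree

variable {V : Type*} {G : SimpleGraph V}

lemma reachable_deleteEdges_of_bccSetoid_mk_eq {e : Sym2 V} (hb : G.IsBridge e) {u v : V}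
    (h : Quotient.mk (bccSetoid G) u = Quotient.mk (bccSetoid G) v) :
    (G.deleteEdges {e}).Reachable u v := by
  rw [deleteEdges_eq_inter_edgeSet]
  refine (Quotient.exact h).mono (deleteEdges_anti ?_)
  rintro _ ⟨rfl, he⟩
  exact ⟨he, hb⟩

lemma bccSetoid_mk_ne_mk_iff_isBridge {u v : V} (h : G.Adj u v) :
    Quotient.mk (bccSetoid G) u ≠ Quotient.mk (bccSetoid G) v ↔ G.IsBridge s(u, v) := by
  refine ⟨fun hne => ?_, fun hb heq => isBridge_iff.mp hb
    (reachable_deleteEdges_of_bccSetoid_mk_eq hb heq)⟩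
  by_contra hb
  exact hne (Quotient.sound (deleteEdges_adj.mpr ⟨h, fun hm => hb hm.2⟩).reachable)

lemma bridgeTree_edgeSet : (bridgeTree G).edgeSet =
    Sym2.map (Quotient.mk (bccSetoid G)) '' {e | e ∈ G.edgeSet ∧ G.IsBridge e} := by
  ext e
  induction e using Sym2.ind with | _ A B =>
  constructor
  · rintro ⟨hne, u, v, rfl, rfl, huv⟩
    exact ⟨s(u, v), ⟨huv, (bccSetoid_mk_ne_mk_iff_isBridge huv).mp hne⟩, rfl⟩
  · rintro ⟨e, ⟨he, hb⟩, hA⟩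
    induction e using Sym2.ind with | _ u v =>
    rw [← hA]
    exact ⟨(bccSetoid_mk_ne_mk_iff_isBridge he).mpr hb, u, v, rfl, rfl, he⟩

lemma bridgeTree_connected (hG : G.Connected) : (bridgeTree G).Connected := by
  have : Nonempty (Quotient (bccSetoid G)) := hG.nonempty.map (Quotient.mk _)
  refine ⟨fun A B => ?_⟩
  induction A using Quotient.ind
  induction B using Quotient.ind
  refine (hG.preconnected _ _).map_of_adj _ fun u v huv => ?_
  by_cases h : Quotient.mk (bccSetoid G) u = Quotient.mk (bccSetoid G) v
  · rw [h]
  · exact Adj.reachable ⟨h, u, v, rfl, rfl, huv⟩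

lemma bridgeTree_isAcyclic : (bridgeTree G).IsAcyclic := by
  rw [isAcyclic_iff_forall_adj_isBridge]
  rintro _ _ ⟨hne, u, v, rfl, rfl, huv⟩
  have hb := (bccSetoid_mk_ne_mk_iff_isBridge huv).mp hne
  refine isBridge_iff.mpr fun hT => isBridge_iff.mp hb <|
    hT.of_map _ (fun _ _ => reachable_deleteEdges_of_bccSetoid_mk_eq hb) ?_
  intro _ _ hAC
  obtain ⟨⟨-, x, y, rfl, rfl, hxy⟩, hAC_ne⟩ := deleteEdges_adj.mp hAC
  refine ⟨x, y, rfl, rfl, (deleteEdges_adj.mpr ⟨hxy, fun h => hAC_ne ?_⟩).reachable⟩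
  exact congrArg (Sym2.map (Quotient.mk _)) (Set.mem_singleton_iff.mp h)

lemma injOn_map_bccSetoid_mk_bridges :
    Set.InjOn (Sym2.map (Quotient.mk (bccSetoid G))) {e | e ∈ G.edgeSet ∧ G.IsBridge e} := by
  intro e₁ he₁ e₂ he₂ heq
  induction e₁ using Sym2.ind with | _ u v =>
  induction e₂ using Sym2.ind with | _ x y =>
  by_contra hne
  have hxy : (G.deleteEdges {s(u, v)}).Adj x y :=
    deleteEdges_adj.mpr ⟨he₂.1, fun h => hne (Set.mem_singleton_iff.mp h).symm⟩
  have reach {a c : V} := reachable_deleteEdges_of_bccSetoid_mk_eq (u := a) (v := c) he₁.2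
  apply isBridge_iff.mp he₁.2
  rcases Sym2.eq_iff.mp heq with ⟨hux, hvy⟩ | ⟨huy, hvx⟩
  · exact (reach hux).trans (hxy.reachable.trans (reach hvy.symm))
  · exact (reach huy).trans (hxy.symm.reachable.trans (reach hvx.symm))

end BridgeTree

theorem stmt_6_general {V : Type*} (G : SimpleGraph V) (hG : G.Connected) :
    (bridgeTree G).IsTree ∧
    Set.BijOn (Sym2.map (Quotient.mk (bccSetoid G))) {e : Sym2 V | e ∈ G.edgeSet ∧ G.IsBridge e}
      (bridgeTree G).edgeSet := by
  refine ⟨⟨bridgeTree_connected hG, bridgeTree_isAcyclic⟩, ?_⟩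
  rw [bridgeTree_edgeSet]
  exact injOn_map_bccSetoid_mk_bridges.bijOn_image

/-- The bridge tree of a connected graph is a tree, and `e ↦ {φ(v), φ(w)}` is a bijection
from the bridges of `G` to the edges of the bridge tree. -/
theorem stmt_6 {V : Type*} [Fintype V] (G : SimpleGraph V) (hG : G.Connected) :
    (bridgeTree G).IsTree ∧
    Set.BijOn (Sym2.map (Quotient.mk (bccSetoid G))) {e : Sym2 V | e ∈ G.edgeSet ∧ G.IsBridge e}
      (bridgeTree G).edgeSet :=
  stmt_6_general G hG
end

section
/- Let G be a connected graph, e ∈ E a non-bridge, and C any cycle containing e. Then every edge that is a bridge of G−e but not a bridge of G lies on C. -/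
/-!
If an edge `f` off the cycle `C` is not a bridge of `G`, its endpoints are joined in `G − f`.
The cycle `C` survives in `G − f`, so `e` is not a bridge of `G − f` either, and deleting it
disconnects nothing there. Hence the endpoints of `f` stay joined in `G − f − e = G − e − f`,
i.e. `f` is not a bridge of `G − e`.
-/

namespace SimpleGraph

variable {V : Type*} {G : SimpleGraph V}

theorem reachable_le_of_adj_le_reachable {H : SimpleGraph V} (h : G.Adj ≤ H.Reachable) :
    G.Reachable ≤ H.Reachable := by
  simpa only [reachable_eq_reflTransGen] using
    Relation.reflTransGen_closed (by simpa only [reachable_eq_reflTransGen] using h)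

theorem Reachable.deleteEdges_singleton_of_not_isBridge {e : Sym2 V} (he : ¬G.IsBridge e)
    {x y : V} (h : G.Reachable x y) : (G.deleteEdges {e}).Reachable x y := by
  induction e with | h u v =>
  rw [isBridge_iff, not_not] at he
  refine reachable_le_of_adj_le_reachable (fun a b hab => ?_) x y h
  by_cases hab_e : s(a, b) = s(u, v)
  · rcases Sym2.eq_iff.mp hab_e with ⟨rfl, rfl⟩ | ⟨rfl, rfl⟩
    exacts [he, he.symm]
  · exact Adj.reachable (deleteEdges_adj.mpr ⟨hab, hab_e⟩)

theorem not_isBridge_deleteEdges_singleton_of_mem_isCycle {e f : Sym2 V} {u : V}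
    {C : G.Walk u u} (hC : C.IsCycle) (he : e ∈ C.edges) (hf : f ∉ C.edges) :
    ¬(G.deleteEdges {f}).IsBridge e := fun hb =>
  have hC_f : ∀ g ∈ C.edges, g ∉ ({f} : Set (Sym2 V)) := fun _ hg hgf =>
    hf (Set.mem_singleton_iff.mp hgf ▸ hg)
  hb.notMem_edges_of_isCycle (hC.toDeleteEdges G {f} hC_f) (by simpa only [Walk.edges_transfer])

end SimpleGraph

open SimpleGraph

theorem stmt_8_general {V : Type*} (G : SimpleGraph V) (e : Sym2 V)
    (a : V) (C : G.Walk a a)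
    (hC : C.IsCycle) (heC : e ∈ C.edges) :
    ∀ f : Sym2 V, (G.deleteEdges {e}).IsBridge f → ¬ G.IsBridge f → f ∈ C.edges := by
  intro f hfe hf
  by_contra hfC
  induction f with | h x y =>
  rw [isBridge_iff, not_not] at hf
  rw [isBridge_iff, deleteEdges_deleteEdges, Set.union_comm, ← deleteEdges_deleteEdges] at hfe
  exact hfe <| hf.deleteEdges_singleton_of_not_isBridge <|
    not_isBridge_deleteEdges_singleton_of_mem_isCycle hC heC hfC

/-- If `e` is a non-bridge of a connected graph `G` and `C` is any cycle containing `e`,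
then every edge that is a bridge of `G − e` but not of `G` lies on `C`. -/
theorem stmt_8 {V : Type*} (G : SimpleGraph V) (hG : G.Connected) (e : Sym2 V)
    (he : e ∈ G.edgeSet) (hnb : ¬ G.IsBridge e) (a : V) (C : G.Walk a a)
    (hC : C.IsCycle) (heC : e ∈ C.edges) :
    ∀ f : Sym2 V, (G.deleteEdges {e}).IsBridge f → ¬ G.IsBridge f → f ∈ C.edges :=
  stmt_8_general G e a C hC heC
end

section
/- Every 2-edge-connected graph can be constructed from a cycle by successively adding paths or cycles of the form (u, e₁, v₁, …, v_k, e_{k+1}, w), where u and w are (possibly equal) vertices of the already constructed graph and v₁,…,v_k (k ≥ 0) are new vertices. -/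
open SimpleGraph

/-- A subgraph of `G` is ear-constructible if it is obtained from a cycle by successively
adding ears: walks `(u, e₁, v₁, …, v_k, e_{k+1}, w)` (paths, or cycles when `u = w`) whose
endpoints `u, w` already belong to the graph constructed so far and whose internal vertices
`v₁, …, v_k` (`k ≥ 0`) are new. -/
inductive EarConstructible {V : Type*} (G : SimpleGraph V) : G.Subgraph → Prop
  | base {v : V} (c : G.Walk v v) (hc : c.IsCycle) : EarConstructible G c.toSubgraph
  | ear {H : G.Subgraph} {u w : V} (hH : EarConstructible G H)
      (hu : u ∈ H.verts) (hw : w ∈ H.verts) (p : G.Walk u w)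
      (htrail : p.IsTrail) (hlen : 1 ≤ p.length)
      (hcyc : u = w → p.support.tail.Nodup)
      (hpath : u ≠ w → p.IsPath)
      (hnew : ∀ x ∈ p.support, x = u ∨ x = w ∨ x ∉ H.verts) :
      EarConstructible G (H ⊔ p.toSubgraph)

/-!
Among the finitely many ear-constructible subgraphs take a maximal one `H`; there is at least
one, since a bridgeless graph with an edge contains a cycle. If `H ≠ G`, connectivity gives an
edge `uv` of `G` outside `H` with `u ∈ H`. As `uv` is not a bridge, some walk from `v` back to
`u` avoids `uv`; cut at its first vertex in `H` and shortened to a path, it completes `uv` to an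
ear, contradicting maximality.
-/

namespace SimpleGraph

variable {V : Type*} {G : SimpleGraph V}

lemma Walk.exists_isPath_meeting_set_at_end (S : Set V) {v u : V} (q : G.Walk v u) (hu : u ∈ S) :
    ∃ w ∈ S, ∃ r : G.Walk v w, r.IsPath ∧ r.edges ⊆ q.edges ∧ ∀ x ∈ r.support, x = w ∨ x ∉ S := by
  classical
  induction q with
  | nil => exact ⟨_, hu, .nil, .nil, by simp, by simp⟩
  | @cons a b c h q ih =>
    by_cases ha : a ∈ S
    · exact ⟨a, ha, .nil, .nil, by simp, by simp⟩
    obtain ⟨w, hw, r, -, hrq, hrS⟩ := ih hu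
    refine ⟨w, hw, (Walk.cons h r).bypass, Walk.bypass_isPath _, ?_, ?_⟩
    · exact List.Subset.trans (Walk.edges_bypass_subset_edges _)
        (by simpa using List.cons_subset_cons _ hrq)
    · intro x hx
      rcases List.mem_cons.mp (Walk.support_bypass_subset_support _ hx :) with rfl | hx
      · exact .inr ha
      · exact hrS x hx

lemma Subgraph.exists_adj_not_adj_of_ne_top (hG : G.Preconnected) {H : G.Subgraph}
    (hne : H.verts.Nonempty) (htop : H ≠ ⊤) :
    ∃ u v, u ∈ H.verts ∧ G.Adj u v ∧ ¬ H.Adj u v := by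
  by_contra! hclosed
  have hverts : ∀ x, x ∈ H.verts := by
    obtain ⟨a, ha⟩ := hne
    intro x
    by_contra hx
    obtain ⟨d, -, hd, hd'⟩ := (hG a x).some.exists_boundary_dart H.verts ha hx
    exact hd' (hclosed _ _ hd d.adj).snd_mem
  refine htop (Subgraph.ext (Set.eq_univ_of_forall hverts) ?_)
  ext u v
  exact ⟨fun h => H.adj_sub h, hclosed u v (hverts u)⟩

lemma Preconnected.exists_isCycle_of_forall_not_isBridge [Nontrivial V] (hG : G.Preconnected)
    (hb : ∀ e : Sym2 V, ¬ G.IsBridge e) : ∃ (u : V) (c : G.Walk u u), c.IsCycle := by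
  obtain ⟨a, b, hab⟩ : ∃ a b, G.Adj a b := ⟨_, hG.exists_adj_of_nontrivial (Classical.arbitrary V)⟩
  have hreach : (G.deleteEdges {s(a, b)}).Reachable a b := by
    simpa [isBridge_iff] using hb s(a, b)
  obtain ⟨u, c, hc, -⟩ := adj_and_reachable_delete_edges_iff_exists_cycle.mp ⟨hab, hreach⟩
  exact ⟨u, c, hc⟩

namespace EarConstructible

lemma verts_nonempty {H : G.Subgraph} (h : EarConstructible G H) : H.verts.Nonempty := by
  cases h with
  | base c => exact ⟨_, c.start_mem_verts_toSubgraph⟩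
  | ear _ hu => exact ⟨_, Or.inl hu⟩

lemma sup_cons {H : G.Subgraph} (hH : EarConstructible G H) {u v w : V} (hu : u ∈ H.verts)
    (huv : G.Adj u v) (r : G.Walk v w) (hr : r.IsPath) (hw : w ∈ H.verts)
    (hrH : ∀ x ∈ r.support, x = w ∨ x ∉ H.verts) (he : s(u, v) ∉ r.edges) :
    EarConstructible G (H ⊔ (Walk.cons huv r).toSubgraph) := by
  refine hH.ear hu hw _ ((Walk.isTrail_cons _ _).mpr ⟨hr.isTrail, he⟩) (by simp)
    (fun _ => hr.support_nodup) (fun huw => (Walk.cons_isPath_iff _ _).mpr ⟨hr, fun hur => ?_⟩) ?_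
  · exact (hrH u hur).elim huw (· hu)
  · intro x hx
    rcases List.mem_cons.mp hx with rfl | hx
    · exact .inl rfl
    · exact (hrH x hx).elim (.inr ∘ .inl) (.inr ∘ .inr)

lemma exists_lt_of_ne_top (hG : G.Preconnected) (hb : ∀ e : Sym2 V, ¬ G.IsBridge e)
    {H : G.Subgraph} (hH : EarConstructible G H) (htop : H ≠ ⊤) :
    ∃ H', EarConstructible G H' ∧ H < H' := by
  obtain ⟨u, v, hu, huv, hnot⟩ := Subgraph.exists_adj_not_adj_of_ne_top hG hH.verts_nonempty htop
  obtain ⟨q, hq⟩ : ∃ q : G.Walk u v, s(u, v) ∉ q.edges := by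
    simpa [isBridge_iff_forall_walk_mem_edges] using hb s(u, v)
  obtain ⟨w, hw, r, hr, hrq, hrH⟩ := q.reverse.exists_isPath_meeting_set_at_end H.verts hu
  have hr_avoids : s(u, v) ∉ r.edges := fun h => hq (by simpa using hrq h)
  refine ⟨_, hH.sup_cons hu huv r hr hw hrH hr_avoids, lt_of_le_of_ne le_sup_left ?_⟩
  intro heq
  exact hnot (heq ▸ .inr (by simp))

end EarConstructible

end SimpleGraph

/-- Every 2-edge-connected graph can be constructed from a cycle by successively adding
paths or cycles with endpoints in the already constructed graph and new internal vertices. -/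
theorem stmt_9 {V : Type*} [Fintype V] (G : SimpleGraph V) (hG : G.Connected)
    (hcard : 2 ≤ Fintype.card V) (hb : ∀ e : Sym2 V, ¬ G.IsBridge e) :
    EarConstructible G ⊤ := by
  have : Nontrivial V := Fintype.one_lt_card_iff_nontrivial.mp hcard
  obtain ⟨u, c, hc⟩ := hG.preconnected.exists_isCycle_of_forall_not_isBridge hb
  obtain ⟨H, hH⟩ := (Set.toFinite {H : G.Subgraph | EarConstructible G H}).exists_maximal
    ⟨_, .base c hc⟩
  by_contra htop
  obtain ⟨H', hH', hlt⟩ :=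
    hH.prop.exists_lt_of_ne_top hG.preconnected hb (fun h => htop (h ▸ hH.prop))
  exact hH.not_gt hH' hlt
end

section
/- A chord-free graph on n vertices has at most 2n−1 edges. -/
open SimpleGraph

/-- A graph is chord-free if no cycle of it has a chord. -/
def ChordFree {V : Type*} (G : SimpleGraph V) : Prop :=
  ∀ (a : V) (C : G.Walk a a), C.IsCycle →
    ∀ u v : V, u ∈ C.support → v ∈ C.support → G.Adj u v → s(u, v) ∈ C.edges

/-!
A chord-free graph has a vertex of degree at most two: let `p` be a longest path, starting at `a`.
Every neighbour of `a` lies on `p`. If `c` is the neighbour farthest along `p` other than the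
second vertex of `p`, then the edge `ac` closes a cycle with the initial segment of `p` up to `c`,
and any third neighbour of `a` would lie on this cycle and give a chord. Deleting such a vertex
removes at most two edges, so induction on the number of vertices gives the bound.
-/

namespace SimpleGraph

theorem Walk.mem_support_takeUntil_of_idxOf_le {V : Type*} [DecidableEq V] {G : SimpleGraph V}
    {a b u w : V} {p : G.Walk a b} (hu : u ∈ p.support) (hw : w ∈ p.support)
    (h : p.support.idxOf u ≤ p.support.idxOf w) : u ∈ (p.takeUntil w hw).support := by
  rw [← p.length_takeUntil hu, ← p.length_takeUntil hw] at h
  rw [← getVert_length_takeUntil hu, ← getVert_takeUntil hw h]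
  exact getVert_mem_support _ _

theorem exists_isPath_forall_adj_mem_support {V : Type*} [Fintype V] [Nonempty V]
    (G : SimpleGraph V) :
    ∃ (a b : V) (p : G.Walk a b), p.IsPath ∧ ∀ w, G.Adj a w → w ∈ p.support := by
  let S := {n | ∃ (a b : V) (p : G.Walk a b), p.IsPath ∧ p.length = n}
  have hbdd : BddAbove S :=
    ⟨Fintype.card V, by rintro _ ⟨a, b, p, hp, rfl⟩; exact hp.length_lt.le⟩
  obtain ⟨a, b, p, hp, hlen⟩ := Nat.sSup_mem (s := S)
    ⟨0, Classical.arbitrary V, _, Walk.nil, Walk.IsPath.nil, rfl⟩ hbdd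
  refine ⟨a, b, p, hp, fun w hw => by_contra fun hwp => ?_⟩
  have := le_csSup hbdd ⟨w, b, Walk.cons hw.symm p, hp.cons hwp, rfl⟩
  simp [hlen] at this

theorem card_edgeSet_eq_card_edgeSet_induce_compl_add_degree {V : Type*} [Fintype V]
    (G : SimpleGraph V) [DecidableRel G.Adj] (v : V) :
    Nat.card G.edgeSet = Nat.card (G.induce {v}ᶜ).edgeSet + G.degree v := by
  classical
  have hinduce := G.card_edgeFinset_induce_compl_singleton v
  have hdelete := G.card_edgeFinset_deleteIncidenceSet v
  have hdeg : G.degree v ≤ G.edgeFinset.card := by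
    rw [← card_incidenceFinset_eq_degree]
    exact Finset.card_le_card (G.incidenceFinset_subset v)
  simp only [Nat.card_eq_fintype_card, ← edgeFinset_card]
  omega

end SimpleGraph

namespace ChordFree

variable {V : Type*} {G : SimpleGraph V}

theorem comap {W : Type*} {H : SimpleGraph W} (f : H ↪g G) (hG : ChordFree G) : ChordFree H := by
  intro a C hC u v hu hv huv
  have hmem := hG _ (C.map f.toHom) ((Walk.isCycle_map_iff_of_injective f.injective).2 hC)
    (f u) (f v) (C.support_map _ ▸ List.mem_map_of_mem hu)
    (C.support_map _ ▸ List.mem_map_of_mem hv) (f.map_adj_iff.2 huv)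
  obtain ⟨e, he, hfe⟩ := List.mem_map.1 (C.edges_map _ ▸ hmem)
  have he' : e = s(u, v) := Sym2.map.injective f.injective hfe
  rwa [← he']

theorem induce (hG : ChordFree G) (s : Set V) : ChordFree (G.induce s) :=
  hG.comap (Embedding.induce s)

theorem eq_or_eq_snd_of_mem_support_takeUntil [DecidableEq V] (hG : ChordFree G)
    {a b c x : V} {p : G.Walk a b} (hp : p.IsPath) (hc : c ∈ p.support) (hac : G.Adj a c)
    (hcs : c ≠ p.snd) (hax : G.Adj a x) (hx : x ∈ (p.takeUntil c hc).support) :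
    x = c ∨ x = p.snd := by
  have hnot : s(a, c) ∉ (p.takeUntil c hc).reverse.edges := by
    rw [Walk.edges_reverse, List.mem_reverse]
    exact fun h => hcs (hp.eq_snd_of_mem_edges (p.edges_takeUntil_subset_edges hc h))
  have hC : (Walk.cons hac (p.takeUntil c hc).reverse).IsCycle :=
    (Walk.cons_isCycle_iff _ _).2 ⟨(hp.takeUntil hc).reverse, hnot⟩
  have hchord := hG a _ hC a x (Walk.start_mem_support _) (by simpa using Or.inr hx) hax
  rw [Walk.edges_cons, List.mem_cons, Walk.edges_reverse, List.mem_reverse] at hchord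
  rcases hchord with h | h
  · exact Or.inl (Sym2.congr_right.1 h)
  · exact Or.inr (hp.eq_snd_of_mem_edges (p.edges_takeUntil_subset_edges hc h))

theorem exists_degree_le_two [Fintype V] [Nonempty V] [DecidableRel G.Adj]
    (hG : ChordFree G) : ∃ v, G.degree v ≤ 2 := by
  classical
  obtain ⟨a, b, p, hp, hsupp⟩ := G.exists_isPath_forall_adj_mem_support
  refine ⟨a, not_lt.1 fun hdeg => ?_⟩
  have hN : 1 < ((G.neighborFinset a).erase p.snd).card := by
    have := Finset.pred_card_le_card_erase (s := G.neighborFinset a) (a := p.snd)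
    rw [card_neighborFinset_eq_degree] at this
    omega
  set N := (G.neighborFinset a).erase p.snd
  obtain ⟨c, hcN, hcmax⟩ :=
    N.exists_max_image (p.support.idxOf ·) (Finset.card_pos.1 (by omega))
  obtain ⟨x, hxN⟩ : (N.erase c).Nonempty :=
    Finset.card_pos.1 (by rw [Finset.card_erase_of_mem hcN]; omega)
  obtain ⟨hxc, hxs, hax⟩ : x ≠ c ∧ x ≠ p.snd ∧ G.Adj a x := by simpa [N] using hxN
  obtain ⟨hcs, hac⟩ : c ≠ p.snd ∧ G.Adj a c := by simpa [N] using hcN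
  have hx := Walk.mem_support_takeUntil_of_idxOf_le (hsupp x hax) (hsupp c hac)
    (hcmax x (Finset.mem_of_mem_erase hxN))
  exact (hG.eq_or_eq_snd_of_mem_support_takeUntil hp _ hac hcs hax hx).elim hxc hxs

end ChordFree

/-- A chord-free graph on `n` vertices has at most `2n − 1` edges. -/
theorem stmt_10 {V : Type*} [Fintype V] (G : SimpleGraph V) (h : ChordFree G) :
    Nat.card G.edgeSet ≤ 2 * Fintype.card V - 1 := by
  classical
  induction hn : Fintype.card V generalizing V with
  | zero =>
    have : IsEmpty V := Fintype.card_eq_zero_iff.1 hn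
    simp
  | succ n ih =>
    have : Nonempty V := Fintype.card_pos_iff.1 (by omega)
    obtain ⟨v, hv⟩ := h.exists_degree_le_two
    have hrest := ih (G.induce {v}ᶜ) (h.induce _) (by rw [Fintype.card_compl_set, hn]; simp)
    have hdeg := G.degree_lt_card_verts v
    have hsplit := G.card_edgeSet_eq_card_edgeSet_induce_compl_add_degree v
    omega
end

section
/- In a connected graph, removing a chord of a cycle does not change the set of bridges: an edge is a bridge in G if and only if it is a bridge in G minus the chord. -/
/-!
Let `e = s(v, w)` be the chord and `H = G - e`. The cycle avoids `e`, so it is a cycle of `H`,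
and `v`, `w` stay joined in `H` after deleting any further edge `f`. Hence `e` is never needed to
join two vertices of `G - f` that are joined at all: `G - f` and `H - f = (G - f) - e` have the
same reachability relation, and being a bridge only depends on that relation.
-/

open SimpleGraph

namespace SimpleGraph

variable {V : Type*} {G : SimpleGraph V} {v w : V}

theorem reachable_deleteEdges_iff_of_reachable (hvw : (G.deleteEdges {s(v, w)}).Reachable v w)
    {x y : V} : (G.deleteEdges {s(v, w)}).Reachable x y ↔ G.Reachable x y := by
  refine ⟨(·.mono (deleteEdges_le _)), fun h ↦ ?_⟩
  obtain ⟨p⟩ := h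
  induction p with
  | nil => rfl
  | @cons p q _ hpq _ ih =>
    refine Reachable.trans ?_ ih
    by_cases he : s(p, q) = s(v, w)
    · rcases Sym2.eq_iff.mp he with ⟨rfl, rfl⟩ | ⟨rfl, rfl⟩
      exacts [hvw, hvw.symm]
    · exact (deleteEdges_adj.mpr ⟨hpq, he⟩).reachable

theorem isBridge_deleteEdges_iff_of_isEdgeReachable_two
    (hvw : (G.deleteEdges {s(v, w)}).IsEdgeReachable 2 v w) (f : Sym2 V) :
    (G.deleteEdges {s(v, w)}).IsBridge f ↔ G.IsBridge f := by
  induction f with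
  | h x y =>
    have hvw' : ((G.deleteEdges {s(x, y)}).deleteEdges {s(v, w)}).Reachable v w := by
      rw [deleteEdges_deleteEdges, Set.union_comm, ← deleteEdges_deleteEdges]
      exact isEdgeReachable_two.mp hvw _
    rw [isBridge_iff, isBridge_iff, deleteEdges_deleteEdges, Set.union_comm,
      ← deleteEdges_deleteEdges, reachable_deleteEdges_iff_of_reachable hvw']

end SimpleGraph

theorem stmt_11_general {V : Type*} (G : SimpleGraph V) (a : V)
    (C : G.Walk a a) (hC : C.IsCycle) (v w : V) (hv : v ∈ C.support) (hw : w ∈ C.support)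
    (hchord : s(v, w) ∉ C.edges) :
    ∀ f : Sym2 V, G.IsBridge f ↔ (G.deleteEdges {s(v, w)}).IsBridge f := by
  have hCH : ∀ e ∈ C.edges, e ∉ ({s(v, w)} : Set (Sym2 V)) := fun e he he' ↦
    hchord (Set.mem_singleton_iff.mp he' ▸ he)
  have hvw : (G.deleteEdges {s(v, w)}).IsEdgeReachable 2 v w :=
    (hC.toDeleteEdges _ _ hCH).isTrail.isEdgeReachable_two (by simpa using hv) (by simpa using hw)
  exact fun f ↦ (isBridge_deleteEdges_iff_of_isEdgeReachable_two hvw f).symm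

/-- Removing a chord of a cycle of a connected graph does not change the set of bridges. -/
theorem stmt_11 {V : Type*} (G : SimpleGraph V) (hG : G.Connected) (a : V)
    (C : G.Walk a a) (hC : C.IsCycle) (v w : V) (hv : v ∈ C.support) (hw : w ∈ C.support)
    (hadj : G.Adj v w) (hchord : s(v, w) ∉ C.edges) :
    ∀ f : Sym2 V, G.IsBridge f ↔ (G.deleteEdges {s(v, w)}).IsBridge f :=
  stmt_11_general G a C hC v w hv hw hchord
end

section
/- Let G be connected, v a vertex, e={v,w} an edge, and F a set of edges incident to v with e ∉ F, such that G−F−e is still connected. Then every edge that is a non-bridge in G but a bridge in G−e is also a non-bridge in G−F and a bridge in G−F−e. -/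
/-!
If `f = xy` is not a bridge of `G` but is one of `G − e`, then `e = vw` crosses the cut of
`G − e − f` separating `x` from `y`: say `v` lies on the side of `x` and `w` on the side of `y`.
In `H = K − e − f`, with `K = G − F`, every vertex is still joined to `x` or to `y`, because
`H + f = G − F − e` is connected; as `H ≤ G − e − f`, this forces `v` to `x` and `w` to `y`
inside `H`, and the edge `e` then joins `x` to `y` in `K − f`. That `f` is a bridge of
`G − F − e` is inherited from its supergraph `G − e`.
-/

namespace SimpleGraph

variable {V : Type*} {G H L : SimpleGraph V} {a b u v w x y : V}

theorem Reachable.deleteEdges_singleton_or (h : G.Reachable x y) :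
    (G.deleteEdges {s(a, b)}).Reachable x y ∨
      ((G.deleteEdges {s(a, b)}).Reachable x a ∧ (G.deleteEdges {s(a, b)}).Reachable b y) ∨
      ((G.deleteEdges {s(a, b)}).Reachable x b ∧ (G.deleteEdges {s(a, b)}).Reachable a y) := by
  obtain ⟨p⟩ := h
  induction p with
  | nil => exact Or.inl .rfl
  | @cons u c z hadj p ih =>
    by_cases he : s(u, c) = s(a, b)
    · rcases Sym2.eq_iff.mp he with ⟨rfl, rfl⟩ | ⟨rfl, rfl⟩ <;>
        rcases ih with h | ⟨h₁, h₂⟩ | ⟨h₁, h₂⟩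
      · exact Or.inr (Or.inl ⟨.rfl, h⟩)
      · exact Or.inl (h₁.symm.trans h₂)
      · exact Or.inl h₂
      · exact Or.inr (Or.inr ⟨.rfl, h⟩)
      · exact Or.inl h₂
      · exact Or.inl (h₁.symm.trans h₂)
    · have hstep : (G.deleteEdges {s(a, b)}).Reachable u c :=
        (deleteEdges_adj.mpr ⟨hadj, he⟩).reachable
      rcases ih with h | ⟨h₁, h₂⟩ | ⟨h₁, h₂⟩
      · exact Or.inl (hstep.trans h)
      · exact Or.inr (Or.inl ⟨hstep.trans h₁, h₂⟩)
      · exact Or.inr (Or.inr ⟨hstep.trans h₁, h₂⟩)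

theorem Reachable.deleteEdges_singleton_left_or_right (h : G.Reachable x u) :
    (G.deleteEdges {s(x, y)}).Reachable x u ∨ (G.deleteEdges {s(x, y)}).Reachable y u := by
  rcases h.deleteEdges_singleton_or (a := x) (b := y) with h | ⟨-, h⟩ | ⟨-, h⟩
  · exact Or.inl h
  · exact Or.inr h
  · exact Or.inl h

theorem Reachable.left_of_not_reachable (hHL : H ≤ L) (hxy : ¬ L.Reachable x y)
    (hxu : L.Reachable x u) (hu : H.Reachable x u ∨ H.Reachable y u) : H.Reachable x u :=
  hu.resolve_right fun hyu ↦ hxy (hxu.trans (hyu.mono hHL).symm)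

theorem not_isBridge_of_isBridge_deleteEdges {K : SimpleGraph V} (hKG : K ≤ G) (hvw : K.Adj v w)
    (hK : (K.deleteEdges {s(v, w)}).Connected) (hG : ¬ G.IsBridge s(x, y))
    (hGe : (G.deleteEdges {s(v, w)}).IsBridge s(x, y)) : ¬ K.IsBridge s(x, y) := by
  set L := (G.deleteEdges {s(v, w)}).deleteEdges {s(x, y)}
  set H := (K.deleteEdges {s(v, w)}).deleteEdges {s(x, y)}
  have hL : ¬ L.Reachable x y := isBridge_iff.mp hGe
  have hHL : H ≤ L := deleteEdges_mono (deleteEdges_mono hKG)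
  have hside (u : V) : H.Reachable x u ∨ H.Reachable y u :=
    (hK.preconnected x u).deleteEdges_singleton_left_or_right
  have hne : s(v, w) ≠ s(x, y) := fun h ↦ hG (isBridge_deleteEdges_singleton.mp (h ▸ hGe))
  have hHK : H ≤ K.deleteEdges {s(x, y)} := deleteEdges_mono (deleteEdges_le _)
  have hadj : (K.deleteEdges {s(x, y)}).Adj v w := deleteEdges_adj.mpr ⟨hvw, hne⟩
  have hcross := (not_not.mp hG).deleteEdges_singleton_or (a := v) (b := w)
  rw [deleteEdges_deleteEdges, Set.union_comm, ← deleteEdges_deleteEdges] at hcross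
  rw [isBridge_iff, not_not]
  rcases hcross with h | ⟨hxv, hwy⟩ | ⟨hxw, hvy⟩
  · exact absurd h hL
  · have hv := hxv.left_of_not_reachable hHL hL (hside v)
    have hw := hwy.symm.left_of_not_reachable hHL (hL ∘ .symm) (hside w).symm
    exact (hv.mono hHK).trans (hadj.reachable.trans (hw.mono hHK).symm)
  · have hw := hxw.left_of_not_reachable hHL hL (hside w)
    have hv := hvy.symm.left_of_not_reachable hHL (hL ∘ .symm) (hside v).symm
    exact (hw.mono hHK).trans (hadj.symm.reachable.trans (hv.mono hHK).symm)

end SimpleGraph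

open SimpleGraph

theorem stmt_12_general {V : Type*} (G : SimpleGraph V) (v w : V)
    (hadj : G.Adj v w) (F : Set (Sym2 V)) (heF : s(v, w) ∉ F)
    (hconn : (G.deleteEdges (F ∪ {s(v, w)})).Connected) :
    ∀ f : Sym2 V, ¬ G.IsBridge f → (G.deleteEdges {s(v, w)}).IsBridge f →
      ¬ (G.deleteEdges F).IsBridge f ∧ (G.deleteEdges (F ∪ {s(v, w)})).IsBridge f := by
  rintro ⟨x, y⟩ hG hGe
  exact ⟨not_isBridge_of_isBridge_deleteEdges (deleteEdges_le F) (deleteEdges_adj.mpr ⟨hadj, heF⟩)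
    (by rwa [deleteEdges_deleteEdges]) hG hGe, hGe.anti (deleteEdges_anti Set.subset_union_right)⟩

/-- Let `G` be connected, `e = {v,w}` an edge, and `F` a set of edges incident with `v`
not containing `e`, such that `G − F − e` is still connected. Then every edge that is a
non-bridge in `G` but a bridge in `G − e` is a non-bridge in `G − F` and a bridge in
`G − F − e`. -/
theorem stmt_12 {V : Type*} (G : SimpleGraph V) (hG : G.Connected) (v w : V)
    (hadj : G.Adj v w) (F : Set (Sym2 V)) (hFE : F ⊆ G.edgeSet)
    (hFv : ∀ f ∈ F, v ∈ f) (heF : s(v, w) ∉ F)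
    (hconn : (G.deleteEdges (F ∪ {s(v, w)})).Connected) :
    ∀ f : Sym2 V, ¬ G.IsBridge f → (G.deleteEdges {s(v, w)}).IsBridge f →
      ¬ (G.deleteEdges F).IsBridge f ∧ (G.deleteEdges (F ∪ {s(v, w)})).IsBridge f :=
  stmt_12_general G v w hadj F heF hconn
end

section
/- If a connected graph has at least two critical edges (edges attaining the maximum separation sep_max > 0), then for any two critical edges e, e' the path between them in the bridge tree has length 2, i.e., all critical edges share a common endpoint in the bridge tree (they form a star in the bridge tree). -/
/-!
A critical edge has `sep > 0`, so it is a bridge. Let `e₁ = x₁y₁` and `e₂ = x₂y₂` be distinct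
critical bridges, oriented so that `y₁` and `y₂` face each other. If some edge `f` separated `y₁`
from `y₂`, the side of `f` containing `yᵢ` would contain `yᵢ` and the whole `xᵢ`-side of `eᵢ`.
A bridge whose sides have `k` and `n - k` vertices has `sep = 2k(n - k)`, and `sep e₁ = sep e₂`
makes the two `xᵢ`-sides equally large, so `f` would separate more pairs than `e₁`. Hence any two
critical bridges touch a common 2-edge-connected component, and edges of a tree that pairwise
touch form a star.
-/

open SimpleGraph

/-- Maximum separation over all edges. -/
noncomputable def sepMax {V : Type*} [Fintype V] [DecidableEq V] (G : SimpleGraph V) : ℕ :=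
  Finset.univ.sup fun e : Sym2 V => sep G e

/-- The values of `k ↦ k (n - k)` at `a` and `b` agree only if `a = b` or `a + b = n`; the latter
is excluded here, and then `s` lies strictly between `a` and `n - a`. -/
lemma mul_lt_mul_of_split_between {n a a' b b' s t : ℕ} (ha : a + a' = n) (hb : b + b' = n)
    (hab : a * a' = b * b') (hst : s + t = n) (has : a < s) (hbt : b < t) : a * a' < s * t := by
  obtain rfl : a = b := by nlinarith
  nlinarith

namespace SimpleGraph

variable {V : Type*} {G : SimpleGraph V}

lemma IsBridge.mem_edgeSet (hG : G.Preconnected) {e : Sym2 V} (he : G.IsBridge e) :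
    e ∈ G.edgeSet := by
  induction e with | h x y => exact he.reachable_iff_adj.mp (hG x y)

lemma reachable_deleteEdges_of_mem {e f : Sym2 V} (hf : f ∈ G.edgeSet) (hne : f ≠ e) {u v : V}
    (hu : u ∈ f) (hv : v ∈ f) : (G.deleteEdges {e}).Reachable u v := by
  obtain rfl | huv := eq_or_ne u v
  · rfl
  obtain rfl := (Sym2.mem_and_mem_iff huv).mp ⟨hu, hv⟩
  exact Adj.reachable (deleteEdges_adj.mpr ⟨hf, hne⟩)

lemma Reachable.deleteEdges_of_not_reachable {u w p : V} (huw : G.Reachable u w)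
    (hup : ¬ G.Reachable u p) (q : V) : (G.deleteEdges {s(p, q)}).Reachable u w := by
  classical
  obtain ⟨r⟩ := huw
  refine ⟨r.toDeleteEdges _ fun f hf hfpq => hup ?_⟩
  rw [Set.mem_singleton_iff.mp hfpq] at hf
  exact (r.takeUntil p (r.fst_mem_support_of_mem_edges hf)).reachable

lemma reachable_deleteEdges_or_of_adj {x y a b : V} (hab : G.Adj a b)
    (ha : (G.deleteEdges {s(x, y)}).Reachable x a ∨ (G.deleteEdges {s(x, y)}).Reachable y a) :
    (G.deleteEdges {s(x, y)}).Reachable x b ∨ (G.deleteEdges {s(x, y)}).Reachable y b := by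
  by_cases he : s(a, b) = s(x, y)
  · rcases Sym2.eq_iff.mp he with ⟨-, rfl⟩ | ⟨-, rfl⟩
    · exact Or.inr .rfl
    · exact Or.inl .rfl
  · have hab' : (G.deleteEdges {s(x, y)}).Adj a b := deleteEdges_adj.mpr ⟨hab, he⟩
    exact ha.imp (·.trans hab'.reachable) (·.trans hab'.reachable)

lemma Walk.reachable_deleteEdges_or {x y a b : V} (p : G.Walk a b)
    (ha : (G.deleteEdges {s(x, y)}).Reachable x a ∨ (G.deleteEdges {s(x, y)}).Reachable y a) :
    (G.deleteEdges {s(x, y)}).Reachable x b ∨ (G.deleteEdges {s(x, y)}).Reachable y b := by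
  induction p with
  | nil => exact ha
  | cons hadj _ ih => exact ih (reachable_deleteEdges_or_of_adj hadj ha)

lemma Connected.reachable_deleteEdges_or (hG : G.Connected) (x y w : V) :
    (G.deleteEdges {s(x, y)}).Reachable x w ∨ (G.deleteEdges {s(x, y)}).Reachable y w :=
  (hG.preconnected x w).some.reachable_deleteEdges_or (Or.inl .rfl)

lemma Connected.exists_eq_mk_reachable (hG : G.Connected) (e : Sym2 V) (w : V) :
    ∃ x y, e = s(x, y) ∧ (G.deleteEdges {e}).Reachable y w := by
  induction e with | h x y =>
  rcases hG.reachable_deleteEdges_or x y w with h | h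
  · exact ⟨y, x, Sym2.eq_swap, h⟩
  · exact ⟨x, y, rfl, h⟩

/-- Removing one edge from a connected graph leaves at most two components. -/
lemma Connected.reachable_deleteEdges_iff (hG : G.Connected) (e : Sym2 V) (u v w : V) :
    (G.deleteEdges {e}).Reachable v w ↔
      ((G.deleteEdges {e}).Reachable u v ↔ (G.deleteEdges {e}).Reachable u w) := by
  induction e with | h x y =>
  have hu := hG.reachable_deleteEdges_or x y u
  have hv := hG.reachable_deleteEdges_or x y v
  have hw := hG.reachable_deleteEdges_or x y w
  simp only [← ConnectedComponent.eq] at *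
  grind

def sideOf (G : SimpleGraph V) (e : Sym2 V) (v : V) : Set V :=
  {w | (G.deleteEdges {e}).Reachable v w}

lemma Connected.sep_eq [Finite V] (hG : G.Connected) (e : Sym2 V) (u : V) :
    sep G e = 2 * (G.sideOf e u).ncard * (G.sideOf e u)ᶜ.ncard := by
  set S := G.sideOf e u
  have hpairs : {p : V × V | ¬ (G.deleteEdges {e}).Reachable p.1 p.2} = S ×ˢ Sᶜ ∪ Sᶜ ×ˢ S := by
    ext ⟨p, q⟩
    simp only [Set.mem_ofPred_eq, Set.mem_union, Set.mem_prod, Set.mem_compl_iff, S, sideOf]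
    rw [hG.reachable_deleteEdges_iff e u]
    tauto
  have hsep : sep G e = {p : V × V | ¬ (G.deleteEdges {e}).Reachable p.1 p.2}.ncard :=
    Nat.card_coe_set_eq _
  rw [hsep, hpairs,
    Set.ncard_union_eq (Set.disjoint_prod.mpr (Or.inl disjoint_compl_right)), Set.ncard_prod,
    Set.ncard_prod]
  ring

lemma le_sepMax [Fintype V] [DecidableEq V] (G : SimpleGraph V) (e : Sym2 V) :
    sep G e ≤ sepMax G :=
  Finset.le_sup (Finset.mem_univ e)

lemma Connected.isBridge_of_sep_pos (hG : G.Connected) {e : Sym2 V} (he : 0 < sep G e) :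
    G.IsBridge e := by
  induction e with | h x y =>
  by_contra hb
  have hconn := hG.connected_delete_edge_of_not_isBridge hb
  have : IsEmpty {p : V × V // ¬ (G.deleteEdges {s(x, y)}).Reachable p.1 p.2} :=
    ⟨fun p => p.2 (hconn.preconnected _ _)⟩
  simp [sep] at he

lemma Walk.IsTrail.isBridge_notMem_edges {u v : V} {p : G.Walk u v} (hp : p.IsTrail)
    {f : Sym2 V} (hf : G.IsBridge f) (huv : (G.deleteEdges {f}).Reachable u v) :
    f ∉ p.edges := by
  induction f with | h a b =>
  rw [isBridge_iff] at hf
  by_cases hub : (G.deleteEdges {s(a, b)}).Reachable u b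
  · rw [Sym2.eq_swap] at hf huv hub ⊢
    exact hp.not_mem_edges_of_not_reachable (fun hua => hf (hua.symm.trans hub))
      (fun hva => hf (hva.symm.trans (huv.symm.trans hub)))
  · exact hp.not_mem_edges_of_not_reachable hub (fun hvb => hub (huv.trans hvb))

lemma Reachable.deleteEdges_isBridge {u v : V} (huv : G.Reachable u v)
    (h : ∀ f, G.IsBridge f → (G.deleteEdges {f}).Reachable u v) :
    (G.deleteEdges {f | G.IsBridge f}).Reachable u v := by
  classical
  obtain ⟨p, hp⟩ := huv.exists_isPath
  exact ⟨p.toDeleteEdges _ fun f hfp hf => hp.isTrail.isBridge_notMem_edges hf (h f hf) hfp⟩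

/-- `f` cannot lie on the `x`-side of `s(x, y)`: a walk from `y` to `z` avoiding `s(x, y)` never
enters that side. -/
lemma Connected.ncard_sideOf_lt [Finite V] (hG : G.Connected) {x y z : V} {f : Sym2 V}
    (hb : G.IsBridge s(x, y)) (hf : f ≠ s(x, y))
    (hyz : (G.deleteEdges {s(x, y)}).Reachable y z) (hsep : ¬ (G.deleteEdges {f}).Reachable y z) :
    (G.sideOf s(x, y) x).ncard < (G.sideOf f y).ncard := by
  induction f with | h p q =>
  have hle : (G.deleteEdges {s(x, y)}).deleteEdges {s(p, q)} ≤ G.deleteEdges {s(p, q)} :=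
    deleteEdges_mono (deleteEdges_le _)
  have hxp : ¬ (G.deleteEdges {s(x, y)}).Reachable x p := fun hxp =>
    hsep ((hyz.deleteEdges_of_not_reachable (fun hyp => hb (hxp.trans hyp.symm)) q).mono hle)
  have hyx : (G.deleteEdges {s(p, q)}).Reachable y x :=
    reachable_deleteEdges_of_mem (hb.mem_edgeSet hG.preconnected) hf.symm
      (Sym2.mem_mk_right x y) (Sym2.mem_mk_left x y)
  have hsub : insert y (G.sideOf s(x, y) x) ⊆ G.sideOf s(p, q) y := by
    rintro w (rfl | hw)
    · exact Reachable.refl _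
    · exact hyx.trans ((Reachable.deleteEdges_of_not_reachable hw hxp q).mono hle)
  have hy : y ∉ G.sideOf s(x, y) x := hb
  calc (G.sideOf s(x, y) x).ncard < (insert y (G.sideOf s(x, y) x)).ncard := by
        rw [Set.ncard_insert_of_notMem hy]; omega
    _ ≤ (G.sideOf s(p, q) y).ncard := Set.ncard_le_ncard hsub

lemma Connected.reachable_of_sep_eq_max [Finite V] (hG : G.Connected) {x₁ y₁ x₂ y₂ : V}
    (hb₁ : G.IsBridge s(x₁, y₁)) (hb₂ : G.IsBridge s(x₂, y₂))
    (h₁ : (G.deleteEdges {s(x₁, y₁)}).Reachable y₁ y₂)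
    (h₂ : (G.deleteEdges {s(x₂, y₂)}).Reachable y₂ y₁)
    (hsep : sep G s(x₁, y₁) = sep G s(x₂, y₂)) (hmax : ∀ f, sep G f ≤ sep G s(x₁, y₁))
    (f : Sym2 V) : (G.deleteEdges {f}).Reachable y₁ y₂ := by
  by_contra hf
  have hf₁ : f ≠ s(x₁, y₁) := by rintro rfl; exact hf h₁
  have hf₂ : f ≠ s(x₂, y₂) := by rintro rfl; exact hf h₂.symm
  have has := hG.ncard_sideOf_lt hb₁ hf₁ h₁ hf
  have hbt := hG.ncard_sideOf_lt hb₂ hf₂ h₂ (fun h => hf h.symm)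
  have hside : G.sideOf f y₂ ⊆ (G.sideOf f y₁)ᶜ := fun w hw hw' => hf (hw'.trans hw.symm)
  have hf_le := hmax f
  rw [hG.sep_eq s(x₁, y₁) x₁, hG.sep_eq s(x₂, y₂) x₂] at hsep
  rw [hG.sep_eq f y₁, hG.sep_eq s(x₁, y₁) x₁] at hf_le
  have := mul_lt_mul_of_split_between (Set.ncard_add_ncard_compl _) (Set.ncard_add_ncard_compl _)
    (by linarith) (Set.ncard_add_ncard_compl _) has (hbt.trans_le (Set.ncard_le_ncard hside))
  linarith

lemma Connected.exists_reachable_of_sep_eq_max [Finite V] (hG : G.Connected) {e₁ e₂ : Sym2 V}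
    (hb₁ : G.IsBridge e₁) (hb₂ : G.IsBridge e₂) (hne : e₁ ≠ e₂)
    (hsep : sep G e₁ = sep G e₂) (hmax : ∀ f, sep G f ≤ sep G e₁) :
    ∃ u ∈ e₁, ∃ v ∈ e₂, (G.deleteEdges {f | G.IsBridge f}).Reachable u v := by
  induction e₂ with | h a b =>
  obtain ⟨x₁, y₁, rfl, hy₁⟩ := hG.exists_eq_mk_reachable e₁ a
  obtain ⟨x₂, y₂, he₂, hy₂⟩ := hG.exists_eq_mk_reachable s(a, b) x₁
  have ha : a ∈ s(x₂, y₂) := he₂ ▸ Sym2.mem_mk_left a b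
  rw [he₂] at hb₂ hne hsep hy₂ ⊢
  refine ⟨y₁, Sym2.mem_mk_right _ _, y₂, Sym2.mem_mk_right _ _, ?_⟩
  refine (hG.preconnected y₁ y₂).deleteEdges_isBridge fun f _ =>
    hG.reachable_of_sep_eq_max hb₁ hb₂ ?_ ?_ hsep hmax f
  · exact hy₁.trans (reachable_deleteEdges_of_mem (hb₂.mem_edgeSet hG.preconnected) hne.symm ha
      (Sym2.mem_mk_right _ _))
  · exact hy₂.trans (reachable_deleteEdges_of_mem (hb₁.mem_edgeSet hG.preconnected) hne
      (Sym2.mem_mk_left _ _) (Sym2.mem_mk_right _ _))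

/-- A triangle `e₁, e₂, e₃` of pairwise touching bridges would close a cycle through `e₁`. -/
lemma exists_forall_reachable_of_pairwise {S : Set (Sym2 V)} (hS : S ⊆ G.edgeSet)
    (hbr : ∀ e ∈ S, G.IsBridge e)
    (hpair : S.Pairwise fun e e' =>
      ∃ u ∈ e, ∃ v ∈ e', (G.deleteEdges {f | G.IsBridge f}).Reachable u v)
    {e₁ e₂ : Sym2 V} (h₁ : e₁ ∈ S) (h₂ : e₂ ∈ S) (hne : e₁ ≠ e₂) :
    ∃ z, ∀ e ∈ S, ∃ x ∈ e, (G.deleteEdges {f | G.IsBridge f}).Reachable x z := by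
  set K := G.deleteEdges {f | G.IsBridge f}
  obtain ⟨u, hu, v, hv, huv⟩ := hpair h₁ h₂ hne
  refine ⟨u, fun e₃ h₃ => ?_⟩
  obtain rfl | h31 := eq_or_ne e₃ e₁
  · exact ⟨u, hu, .rfl⟩
  obtain rfl | h32 := eq_or_ne e₃ e₂
  · exact ⟨v, hv, huv.symm⟩
  obtain ⟨a, ha, c, hc, hac⟩ := hpair h₁ h₃ h31.symm
  obtain ⟨b, hb, d, hd, hbd⟩ := hpair h₂ h₃ h32.symm
  by_cases hau : K.Reachable a u
  · exact ⟨c, hc, hac.symm.trans hau⟩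
  by_cases hbv : K.Reachable b v
  · exact ⟨d, hd, hbd.symm.trans (hbv.trans huv.symm)⟩
  exfalso
  have hb₁ := hbr e₁ h₁
  have hK : K ≤ G.deleteEdges {e₁} := deleteEdges_anti (by simpa using hb₁)
  have hua : u ≠ a := by rintro rfl; exact hau .rfl
  obtain rfl := (Sym2.mem_and_mem_iff hua).mp ⟨hu, ha⟩
  exact hb₁ <| (huv.mono hK).trans <|
    (reachable_deleteEdges_of_mem (hS h₂) hne.symm hv hb).trans <| (hbd.mono hK).trans <|
    (reachable_deleteEdges_of_mem (hS h₃) h31 hd hc).trans (hac.symm.mono hK)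

end SimpleGraph

/-- If a connected graph has at least two critical edges (edges of maximum separation
`sepMax > 0`), then all critical edges are incident with one common vertex of the bridge
tree, i.e. with a common bridgeless connected component: they form a star in the bridge
tree, and in particular any two of them are at distance 2 there. -/
theorem stmt_13 {V : Type*} [Fintype V] [DecidableEq V] (G : SimpleGraph V)
    (hG : G.Connected) (hpos : 0 < sepMax G) (e₁ e₂ : Sym2 V)
    (h₁ : e₁ ∈ G.edgeSet ∧ sep G e₁ = sepMax G)
    (h₂ : e₂ ∈ G.edgeSet ∧ sep G e₂ = sepMax G) (hne : e₁ ≠ e₂) :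
    ∃ z : V, ∀ e : Sym2 V, e ∈ G.edgeSet → sep G e = sepMax G →
      ∃ x ∈ e, (G.deleteEdges {f | G.IsBridge f}).Reachable x z := by
  set S := {e | e ∈ G.edgeSet ∧ sep G e = sepMax G}
  have hbr : ∀ e ∈ S, G.IsBridge e := fun e he => hG.isBridge_of_sep_pos (he.2 ▸ hpos)
  have hpair : S.Pairwise fun e e' =>
      ∃ u ∈ e, ∃ v ∈ e', (G.deleteEdges {f | G.IsBridge f}).Reachable u v :=
    fun e he e' he' hne => hG.exists_reachable_of_sep_eq_max (hbr e he) (hbr e' he') hne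
      (he.2.trans he'.2.symm) (fun f => he.2 ▸ le_sepMax G f)
  obtain ⟨z, hz⟩ := exists_forall_reachable_of_pairwise (fun e he => he.1) hbr hpair h₁ h₂ hne
  exact ⟨z, fun e he hsep => hz e ⟨he, hsep⟩⟩
end

section
/- For distinct bridges e and e' of a connected graph, one component of G−e is strictly contained in one component of G−e'. -/
/-!
Write `e = s(u, v)` and `e' = s(u', v')`. Since `e` is a bridge, `u` and `v` lie in different
components of `G − e`, so one of them, `x`, is not joined to `u'` in `G − e`. No walk inside the
component of `x` in `G − e` can use `e'`, so that component is contained in the component of `x`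
in `G − e'`; the containment is strict because the other endpoint of `e` is adjacent to `x` in
`G − e'`.
-/

open SimpleGraph

namespace SimpleGraph

variable {V : Type*} {H : SimpleGraph V}

lemma Reachable.deleteEdges_of_not_reachable_s14 {x z a : V} (b : V) (hxa : ¬ H.Reachable x a)
    (hxz : H.Reachable x z) : (H.deleteEdges {s(a, b)}).Reachable x z := by
  obtain ⟨p⟩ := hxz
  refine ⟨p.transfer _ fun d hd ↦ ?_⟩
  rw [edgeSet_deleteEdges]
  refine ⟨p.edges_subset_edgeSet hd, ?_⟩
  rintro rfl
  classical
  exact hxa ⟨p.takeUntil a (p.fst_mem_support_of_mem_edges hd)⟩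

lemma exists_eq_not_reachable_of_not_reachable {u v : V} (huv : ¬ H.Reachable u v) (a : V) :
    ∃ x w, s(x, w) = s(u, v) ∧ ¬ H.Reachable x w ∧ ¬ H.Reachable x a := by
  by_cases hua : H.Reachable u a
  · exact ⟨v, u, Sym2.eq_swap, fun hvu ↦ huv hvu.symm, fun hva ↦ huv (hua.trans hva.symm)⟩
  · exact ⟨u, v, rfl, huv, hua⟩

end SimpleGraph

theorem stmt_14_general {V : Type*} (G : SimpleGraph V) (hG : G.Connected)
    (e e' : Sym2 V) (he : G.IsBridge e) (hne : e ≠ e') :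
    ∃ x y : V, {z : V | (G.deleteEdges {e}).Reachable x z} ⊂
      {z : V | (G.deleteEdges {e'}).Reachable y z} := by
  induction e using Sym2.inductionOn with | hf u v =>
  induction e' using Sym2.inductionOn with | hf u' v' =>
  obtain ⟨x, w, hxw, hsep, hxu'⟩ :=
    exists_eq_not_reachable_of_not_reachable (isBridge_iff.mp he) u'
  have hadj : G.Adj x w := by
    rw [← mem_edgeSet, hxw]
    exact he.reachable_iff_adj.mp (hG.preconnected u v)
  have hsub : {z | (G.deleteEdges {s(u, v)}).Reachable x z} ⊆
      {z | (G.deleteEdges {s(u', v')}).Reachable x z} := fun z hz ↦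
    (hz.deleteEdges_of_not_reachable_s14 v' hxu').mono <| by
      rw [deleteEdges_deleteEdges]
      exact deleteEdges_anti Set.subset_union_right
  refine ⟨x, x, (Set.ssubset_iff_of_subset hsub).mpr ⟨w, ?_, hsep⟩⟩
  exact (deleteEdges_adj.mpr ⟨hadj, by simpa [hxw] using hne⟩).reachable

/-- For distinct bridges `e` and `e'` of a connected graph, some component of `G − e`
is strictly contained in some component of `G − e'`. -/
theorem stmt_14 {V : Type*} [Fintype V] (G : SimpleGraph V) (hG : G.Connected)
    (e e' : Sym2 V) (he : G.IsBridge e) (he' : G.IsBridge e') (hne : e ≠ e') :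
    ∃ x y : V, {z : V | (G.deleteEdges {e}).Reachable x z} ⊂
      {z : V | (G.deleteEdges {e'}).Reachable y z} :=
  stmt_14_general G hG e e' he hne
end

section
/- Let G be a connected graph on n vertices with m edges, v a vertex, and suppose adding an edge incident to v creates a cycle of length ℓ (reducing the sum of relevances of v from R to R'). Then the improvement in disconnection cost (1/m)·R − (1/(m+1))·R' under the simple-minded adversary is at most 1/2 + (1/(m+1))·(ℓ−1)(n−ℓ/2). -/
/-!
Write `R(v) = ∑ₓ N(x)`, where `N(x)` is the number of edges separating `v` from `x`. Along an
edge `N` changes by at most one, and `N(v) = 0`, so every value below `N(x)` is taken on a path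
from `x` to `v`: hence `N(x) ≤ #{y | N(y) < N(x)}`, and summing over `x` counts each unordered
pair at most once, so `2R ≤ n(n - 1) ≤ (m + 1)m` because `m ≥ n - 1`.

The cycle minus the new edge is a path `w → v` in `G` of length `ℓ - 1`. If `e` is off this path,
`v` and `w` stay connected in `G - e`, so the new edge does not lower `rel(e, v)`. An edge of the
path followed by `j` more edges to `v` keeps those `j + 1` vertices on the side of `v`, so its
relevance is at most `n - 1 - j`, and `R - R' ≤ ∑_{j < ℓ - 1} (n - 1 - j) = (ℓ - 1)(n - ℓ/2)`.
Finally `R/m - R'/(m + 1) = R/(m(m + 1)) + (R - R')/(m + 1)`.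
-/

open SimpleGraph

open Finset

theorem Finset.two_mul_sum_card_filter_lt_le {α β : Type*} [Fintype α] [DecidableEq α]
    [LinearOrder β] (f : α → β) :
    2 * ∑ x, #{y | f y < f x} ≤ Fintype.card α * (Fintype.card α - 1) := by
  have hcomm : ∑ x, #{y | f y < f x} = ∑ x, #{y | f x < f y} := by
    simp only [card_filter]
    exact sum_comm
  have hpair (x : α) : #{y | f y < f x} + #{y | f x < f y} ≤ Fintype.card α - 1 := by
    rw [← card_union_of_disjoint (disjoint_filter.2 fun _ _ h h' => lt_asymm h h'),
      ← filter_or, ← card_univ, ← card_erase_of_mem (mem_univ x)]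
    exact card_le_card fun y hy => mem_erase.2
      ⟨fun hyx => by simp [hyx] at hy, mem_univ y⟩
  calc 2 * ∑ x, #{y | f y < f x} = ∑ x, (#{y | f y < f x} + #{y | f x < f y}) := by
        rw [sum_add_distrib, ← hcomm, two_mul]
    _ ≤ ∑ _ : α, (Fintype.card α - 1) := sum_le_sum fun x _ => hpair x
    _ = Fintype.card α * (Fintype.card α - 1) := by simp

namespace SimpleGraph

variable {V : Type*} {G H : SimpleGraph V} {a u v w x y : V}

section Cycle

variable [DecidableEq V]

namespace Walk

theorem IsCycle.exists_isCycle_snd_eq {C : H.Walk a a} (hC : C.IsCycle)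
    (he : s(v, w) ∈ C.edges) : ∃ D : H.Walk v v, D.IsCycle ∧ D.length = C.length ∧ D.snd = w := by
  have hv := C.fst_mem_support_of_mem_edges he
  have heD : s(v, w) ∈ (C.rotate v hv).edges := (C.rotate_edges v hv).mem_iff.2 he
  have hD := hC.rotate hv
  have hlen := C.length_rotate v hv
  obtain ⟨x, h, q, hDq⟩ := not_nil_iff.1 hD.not_nil
  rw [hDq] at hD heD hlen
  rcases List.mem_cons.1 heD with hfirst | hlater
  · exact ⟨_, hD, hlen, by simpa using (Sym2.congr_right.1 hfirst).symm⟩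
  · refine ⟨_, hD.reverse, by rwa [length_reverse], ?_⟩
    have hq : ¬ q.Nil := edges_eq_nil.not.mp (List.ne_nil_of_mem hlater)
    rw [snd_reverse, penultimate_cons_of_not_nil _ _ hq,
      ((cons_isCycle_iff q h).1 hD).1.eq_penultimate_of_mem_edges hlater]

theorem IsCycle.exists_isPath_of_mem_edges {C : H.Walk a a} (hC : C.IsCycle)
    (he : s(v, w) ∈ C.edges) :
    ∃ p : H.Walk w v, p.IsPath ∧ s(v, w) ∉ p.edges ∧ p.length + 1 = C.length := by
  obtain ⟨D, hD, hlen, hsnd⟩ := hC.exists_isCycle_snd_eq he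
  obtain ⟨x, h, q, rfl⟩ := not_nil_iff.1 hD.not_nil
  obtain rfl : x = w := by simpa using hsnd
  exact ⟨q, ((cons_isCycle_iff q h).1 hD).1, ((cons_isCycle_iff q h).1 hD).2, hlen⟩

end Walk

theorem exists_isPath_of_isCycle_sup_edge {C : (G ⊔ fromEdgeSet {s(v, w)}).Walk a a}
    (hC : C.IsCycle) (he : s(v, w) ∈ C.edges) :
    ∃ p : G.Walk w v, p.IsPath ∧ p.length + 1 = C.length := by
  obtain ⟨p, hp, hvw, hlen⟩ := hC.exists_isPath_of_mem_edges he
  have hpG : ∀ e ∈ p.edges, e ∈ G.edgeSet := fun e he' => by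
    have := p.edges_subset_edgeSet he'
    rw [edgeSet_sup, edgeSet_fromEdgeSet] at this
    exact this.resolve_right fun h => hvw (h.1 ▸ he')
  exact ⟨p.transfer G hpG, hp.transfer hpG, by rwa [Walk.length_transfer]⟩

end Cycle

theorem Reachable.of_sup_edge (hvw : H.Reachable v w)
    (h : (H ⊔ fromEdgeSet {s(v, w)}).Reachable x y) : H.Reachable x y := by
  obtain ⟨p⟩ := h
  induction p with
  | nil => rfl
  | cons hadj _ ih =>
    refine Reachable.trans ?_ ih
    rcases hadj with hadj | ⟨hedge, -⟩
    · exact hadj.reachable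
    · rcases Sym2.eq_iff.1 hedge with ⟨rfl, rfl⟩ | ⟨rfl, rfl⟩
      exacts [hvw, hvw.symm]

theorem sup_edge_deleteEdges_le (e : Sym2 V) :
    (G ⊔ fromEdgeSet {s(v, w)}).deleteEdges {e} ≤ G.deleteEdges {e} ⊔ fromEdgeSet {s(v, w)} := by
  simp only [deleteEdges, sup_sdiff]
  exact sup_le_sup_left sdiff_le _

theorem rel_le_rel_sup_edge [Finite V] (e : Sym2 V) (u : V)
    (hvw : (G.deleteEdges {e}).Reachable v w) :
    rel G e u ≤ rel (G ⊔ fromEdgeSet {s(v, w)}) e u :=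
  Nat.card_mono (Set.toFinite _) fun _ hx hreach =>
    hx (hvw.of_sup_edge (hreach.mono (sup_edge_deleteEdges_le e)))

open scoped Classical in
theorem rel_eq_card [Fintype V] (G : SimpleGraph V) (e : Sym2 V) (v : V) :
    rel G e v = #{x | ¬ (G.deleteEdges {e}).Reachable v x} := by
  rw [rel, Nat.card_eq_fintype_card, Fintype.card_subtype]

theorem reachable_deleteEdges_of_notMem_edges {e : Sym2 V} (p : G.Walk u v) (he : e ∉ p.edges) :
    (G.deleteEdges {e}).Reachable u v :=
  ⟨p.toDeleteEdges {e} fun _ hf hfe => he (Set.mem_singleton_iff.1 hfe ▸ hf)⟩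

namespace Walk

theorem IsPath.rel_add_length_lt [Fintype V] {e : Sym2 V} {q : G.Walk y v} (hq : q.IsPath)
    (he : e ∉ q.edges) : rel G e v + q.length < Fintype.card V := by
  classical
  have hreach (x : V) (hx : x ∈ q.support) : (G.deleteEdges {e}).Reachable v x :=
    (reachable_deleteEdges_of_notMem_edges (q.dropUntil x hx)
      fun hd => he (q.edges_dropUntil_subset_edges hx hd)).symm
  have hdisj : Disjoint (α := Finset V) {x | ¬ (G.deleteEdges {e}).Reachable v x}
      q.support.toFinset :=
    Finset.disjoint_left.2 fun x hx hxq => by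
      simp [hreach x (List.mem_toFinset.1 hxq)] at hx
  have hcard := card_union_of_disjoint hdisj ▸ card_le_univ (_ ∪ _)
  rw [List.toFinset_card_of_nodup hq.support_nodup, length_support] at hcard
  rw [rel_eq_card]
  omega

theorem IsPath.two_mul_sum_rel_add_le [Fintype V] {p : G.Walk u v} (hp : p.IsPath) :
    2 * (p.edges.map (rel G · v)).sum + p.length * (p.length + 1) ≤
      2 * p.length * Fintype.card V := by
  induction p with
  | nil => simp
  | @cons u x v h q ih =>
    obtain ⟨hq, hu⟩ := cons_isPath_iff h q |>.1 hp
    have hfirst := hq.rel_add_length_lt (e := s(u, x))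
      fun he => hu (q.fst_mem_support_of_mem_edges he)
    have := ih hq
    simp only [edges_cons, List.map_cons, List.sum_cons, length_cons]
    nlinarith

end Walk

theorem RSum_eq_sum [Fintype V] [Fintype G.edgeSet] (v : V) :
    RSum G v = ∑ e ∈ G.edgeFinset, rel G e v := by
  rw [RSum, ← coe_edgeFinset, finsum_mem_coe_finset]

theorem two_mul_RSum_add_le [Fintype V] {p : G.Walk w v} (hp : p.IsPath) :
    2 * RSum G v + p.length * (p.length + 1) ≤
      2 * RSum (G ⊔ fromEdgeSet {s(v, w)}) v + 2 * p.length * Fintype.card V := by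
  classical
  have hP : p.edges.toFinset ⊆ G.edgeFinset := fun e he =>
    mem_edgeFinset.2 (p.edges_subset_edgeSet (List.mem_toFinset.1 he))
  have hoff : ∑ e ∈ G.edgeFinset \ p.edges.toFinset, rel G e v ≤
      RSum (G ⊔ fromEdgeSet {s(v, w)}) v := by
    rw [RSum_eq_sum]
    calc _ ≤ ∑ e ∈ G.edgeFinset \ p.edges.toFinset, rel (G ⊔ fromEdgeSet {s(v, w)}) e v :=
          sum_le_sum fun e he => rel_le_rel_sup_edge e v
            (reachable_deleteEdges_of_notMem_edges p fun hp' =>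
              (mem_sdiff.1 he).2 (List.mem_toFinset.2 hp')).symm
      _ ≤ _ := sum_le_sum_of_subset
          (sdiff_subset.trans (edgeFinset_subset_edgeFinset.2 le_sup_left))
  have hon : ∑ e ∈ p.edges.toFinset, rel G e v = (p.edges.map (rel G · v)).sum :=
    List.sum_toFinset _ hp.isTrail.edges_nodup
  have hpath := hp.two_mul_sum_rel_add_le
  rw [RSum_eq_sum, ← sum_sdiff hP]
  omega

theorem Walk.exists_mem_support_apply_eq {f : V → ℕ} (hf : ∀ x y, G.Adj x y → f x ≤ f y + 1)
    (p : G.Walk u v) {k : ℕ} (hvk : f v ≤ k) (hku : k ≤ f u) : ∃ x ∈ p.support, f x = k := by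
  induction p with
  | nil => exact ⟨_, start_mem_support _, le_antisymm hvk hku⟩
  | @cons u y v h q ih =>
    by_cases hky : k ≤ f y
    · obtain ⟨x, hx, rfl⟩ := ih hvk hky
      exact ⟨x, by simp [hx], rfl⟩
    · exact ⟨u, start_mem_support _, by have := hf u y h; omega⟩

theorem Connected.le_card_filter_lt [Fintype V] (hG : G.Connected)
    {f : V → ℕ} (hf : ∀ x y, G.Adj x y → f x ≤ f y + 1) (hv : f v = 0) (x : V) :
    f x ≤ #{y | f y < f x} := by
  obtain ⟨p⟩ := hG.preconnected x v
  calc f x = #(range (f x)) := (card_range _).symm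
    _ ≤ #(({y | f y < f x} : Finset V).image f) := card_le_card fun k hk => by
        obtain ⟨y, -, rfl⟩ :=
          p.exists_mem_support_apply_eq hf (hv ▸ Nat.zero_le k) (mem_range.1 hk).le
        exact mem_image_of_mem f (by simpa using hk)
    _ ≤ #{y | f y < f x} := card_image_le

section

open scoped Classical

variable [Fintype V]

noncomputable def numSeparatingEdges (G : SimpleGraph V) (v x : V) : ℕ :=
  #{e ∈ G.edgeFinset | ¬ (G.deleteEdges {e}).Reachable v x}

theorem numSeparatingEdges_self (G : SimpleGraph V) (v : V) : G.numSeparatingEdges v v = 0 := by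
  simp [numSeparatingEdges]

theorem numSeparatingEdges_le_add_one (v : V) (h : G.Adj x y) :
    G.numSeparatingEdges v x ≤ G.numSeparatingEdges v y + 1 := by
  refine (card_le_card fun e he => ?_).trans (card_insert_le s(x, y) _)
  rw [mem_filter] at he
  refine mem_insert.2 (or_iff_not_imp_left.2 fun hne => mem_filter.2 ⟨he.1, fun hy => he.2 ?_⟩)
  exact hy.trans (Adj.reachable (by simpa [h.symm, Sym2.eq_swap] using Ne.symm hne))

theorem sum_rel_eq_sum_numSeparatingEdges (G : SimpleGraph V) (v : V) :
    ∑ e ∈ G.edgeFinset, rel G e v = ∑ x, G.numSeparatingEdges v x := by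
  simp only [rel_eq_card, numSeparatingEdges]
  exact sum_card_bipartiteAbove_eq_sum_card_bipartiteBelow _

theorem Connected.two_mul_RSum_le (hG : G.Connected) (v : V) :
    2 * RSum G v ≤ Fintype.card V * (Fintype.card V - 1) := by
  rw [RSum_eq_sum, sum_rel_eq_sum_numSeparatingEdges]
  refine le_trans ?_ (two_mul_sum_card_filter_lt_le (G.numSeparatingEdges v))
  exact Nat.mul_le_mul_left 2 (sum_le_sum fun x _ => hG.le_card_filter_lt
    (fun _ _ => numSeparatingEdges_le_add_one v) (G.numSeparatingEdges_self v) x)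

end

end SimpleGraph

theorem div_sub_div_add_one_le {R R' m B : ℝ} (hm : 0 < m) (hR : 2 * R ≤ (m + 1) * m)
    (hRR' : R - R' ≤ B) : R / m - R' / (m + 1) ≤ 1 / 2 + 1 / (m + 1) * B := by
  have hm1 : 0 < m + 1 := by linarith
  calc R / m - R' / (m + 1) = R / (m * (m + 1)) + (R - R') / (m + 1) := by field_simp; ring
    _ ≤ 1 / 2 + B / (m + 1) := by
        refine add_le_add ?_ (div_le_div_of_nonneg_right hRR' hm1.le)
        rw [div_le_iff₀ (by positivity)]
        linarith
    _ = 1 / 2 + 1 / (m + 1) * B := by ring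

theorem stmt_18_general {V : Type*} [Fintype V] (G : SimpleGraph V) (hG : G.Connected)
    (v w : V) (a : V)
    (C : (G ⊔ fromEdgeSet {s(v, w)}).Walk a a) (hC : C.IsCycle)
    (heC : s(v, w) ∈ C.edges) :
    (RSum G v : ℝ) / (Nat.card G.edgeSet : ℝ) -
      (RSum (G ⊔ fromEdgeSet {s(v, w)}) v : ℝ) / ((Nat.card G.edgeSet : ℝ) + 1) ≤
    1 / 2 + (1 / ((Nat.card G.edgeSet : ℝ) + 1)) *
      ((C.length : ℝ) - 1) * ((Fintype.card V : ℝ) - (C.length : ℝ) / 2) := by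
  classical
  obtain ⟨p, hp, hlen⟩ := exists_isPath_of_isCycle_sup_edge hC heC
  have hnm : Fintype.card V ≤ Nat.card G.edgeSet + 1 :=
    Nat.card_eq_fintype_card (α := V) ▸ hG.card_vert_le_card_edgeSet_add_one
  have hpV := hp.length_lt
  have hC3 := hC.three_le_length
  have hR : 2 * RSum G v ≤ (Nat.card G.edgeSet + 1) * Nat.card G.edgeSet :=
    (hG.two_mul_RSum_le v).trans (Nat.mul_le_mul hnm (by omega))
  have hΔ : (2 * RSum G v + p.length * (p.length + 1) : ℝ) ≤
      2 * RSum (G ⊔ fromEdgeSet {s(v, w)}) v + 2 * p.length * Fintype.card V := by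
    exact_mod_cast two_mul_RSum_add_le hp
  have hℓ : (C.length : ℝ) = p.length + 1 := by rw [← hlen]; push_cast; ring
  rw [mul_assoc]
  refine div_sub_div_add_one_le (by norm_cast; omega) (by exact_mod_cast hR) ?_
  rw [hℓ]
  linarith

/-- If player `v` builds a new edge `{v,w}` creating a cycle of length `ℓ`, then her
improvement in disconnection cost `R/m − R'/(m+1)` under the simple-minded adversary is
at most `1/2 + (1/(m+1))·(ℓ−1)·(n−ℓ/2)`. -/
theorem stmt_18 {V : Type*} [Fintype V] (G : SimpleGraph V) (hG : G.Connected)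
    (v w : V) (hvw : v ≠ w) (hna : ¬ G.Adj v w) (a : V)
    (C : (G ⊔ fromEdgeSet {s(v, w)}).Walk a a) (hC : C.IsCycle)
    (heC : s(v, w) ∈ C.edges) :
    (RSum G v : ℝ) / (Nat.card G.edgeSet : ℝ) -
      (RSum (G ⊔ fromEdgeSet {s(v, w)}) v : ℝ) / ((Nat.card G.edgeSet : ℝ) + 1) ≤
    1 / 2 + (1 / ((Nat.card G.edgeSet : ℝ) + 1)) *
      ((C.length : ℝ) - 1) * ((Fintype.card V : ℝ) - (C.length : ℝ) / 2) :=
  stmt_18_general G hG v w a C hC heC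
end
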